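/- Let k ≥ 2, n ≥ 1 and s ≥ 0 be integers, and let L be a graph of order n. If there is a k-star decomposition of the join L ∨ K_s, then α(L) ≥ n + s − |E(L ∨ K_s)|/k, where α(L) denotes the independence number of L. -/

import Mathlib

/-! The centers of the stars of a `k`-star decomposition `D` of a graph `G` number at most
`|D| = |E(G)|/k`, and every edge has an endpoint among them, so the remaining vertices form an
independent set of `G` of size at least `|V(G)| - |E(G)|/k`. In `L ∨ K_s` an independent set
either lies in `L` or is a single vertex of `K_s`, so its size is at most `α(L)` (as `L` has a
vertex). -/

/-- The star with centre `c` and leaf set `Lf` is a `k`-star in `G`. -/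
def IsStarIn {V : Type*} (G : SimpleGraph V) (k : ℕ) (c : V) (Lf : Finset V) : Prop :=
  Lf.card = k ∧ ∀ v ∈ Lf, G.Adj c v

/-- The edge set of the star with centre `c` and leaf set `Lf`. -/
def starEdges {V : Type*} [DecidableEq V] (c : V) (Lf : Finset V) : Finset (Sym2 V) :=
  Lf.image (fun v => s(c, v))

/-- A partial `k`-star decomposition of `G`: a set of `k`-stars of `G` whose edge sets are
pairwise disjoint. -/
def IsPartialStarDecompOn {V : Type*} [DecidableEq V] (G : SimpleGraph V) (k : ℕ)
    (D : Finset (V × Finset V)) : Prop :=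
  (∀ p ∈ D, IsStarIn G k p.1 p.2) ∧
  (∀ p ∈ D, ∀ q ∈ D, p ≠ q → Disjoint (starEdges p.1 p.2) (starEdges q.1 q.2))

/-- A `k`-star decomposition of `G`: a partial one whose stars' edge sets cover `E(G)`. -/
def IsStarDecompOn {V : Type*} [DecidableEq V] (G : SimpleGraph V) (k : ℕ)
    (D : Finset (V × Finset V)) : Prop :=
  IsPartialStarDecompOn G k D ∧ ∀ e ∈ G.edgeSet, ∃ p ∈ D, e ∈ starEdges p.1 p.2

/-- The leave of a partial star decomposition `D` of `G`: the graph on `V(G)` consisting of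
the edges of `G` lying in no star of `D`. -/
def leaveOf {V : Type*} [DecidableEq V] (G : SimpleGraph V) (D : Finset (V × Finset V)) :
    SimpleGraph V :=
  G.deleteEdges ↑(D.biUnion fun p => starEdges p.1 p.2)

/-- The join `L ∨ K_s` of `L` with a complete graph on `s` new vertices. -/
def joinK {V : Type*} (L : SimpleGraph V) (s : ℕ) : SimpleGraph (V ⊕ Fin s) where
  Adj x y := x ≠ y ∧ ∀ a b, x = Sum.inl a → y = Sum.inl b → L.Adj a b
  symm := by
    constructor
    rintro x y ⟨hxy, h⟩
    exact ⟨hxy.symm, fun a b ha hb => (h b a hb ha).symm⟩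
  loopless := by constructor; rintro x ⟨h, -⟩; exact h rfl

/-- The independence number `α(L)` of a graph `L`. -/
noncomputable def indepNumber {V : Type*} [Fintype V] (L : SimpleGraph V) : ℕ :=
  sSup {m : ℕ | ∃ t : Finset V, t.card = m ∧ ∀ x ∈ t, ∀ y ∈ t, x ≠ y → ¬ L.Adj x y}

/-- Push a star on `Fin n` forward to `Fin N` along the canonical inclusion. -/
def castStar {n N : ℕ} (h : n ≤ N) (p : Fin n × Finset (Fin n)) :
    Fin N × Finset (Fin N) :=
  (Fin.castLE h p.1, p.2.image (Fin.castLE h))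

/-- The partial `k`-star decomposition `A` of `K_n` can be embedded in a `k`-star
decomposition of `K_{n+s}`. -/
def EmbedsIn (k n s : ℕ) (A : Finset (Fin n × Finset (Fin n))) : Prop :=
  ∃ B : Finset (Fin (n + s) × Finset (Fin (n + s))),
    IsStarDecompOn (⊤ : SimpleGraph (Fin (n + s))) k B ∧
    A.image (castStar (Nat.le_add_right n s)) ⊆ B

/-- `Δ_T = |E_T| - k·∑_{x∈T} γ(x)`, where `E_T` is the set of edges of `G` incident with at
least one vertex of `T`. -/
noncomputable def starDelta {V : Type*} (G : SimpleGraph V) (k : ℕ) (γ : V → ℕ)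
    (T : Finset V) : ℤ :=
  ({e ∈ G.edgeSet | ∃ v ∈ T, v ∈ e}.ncard : ℤ) - k * ∑ x ∈ T, γ x

open Finset SimpleGraph

section StarDecomposition

variable {W : Type*} [DecidableEq W] {G : SimpleGraph W} {k : ℕ} {D : Finset (W × Finset W)}

lemma card_starEdges (c : W) (Lf : Finset W) : #(starEdges c Lf) = #Lf :=
  card_image_of_injective _ fun _ _ => Sym2.congr_right.mp

lemma IsStarDecompOn.edgeSet_eq (hD : IsStarDecompOn G k D) :
    G.edgeSet = ↑(D.biUnion fun p => starEdges p.1 p.2) := by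
  ext e
  simp only [coe_biUnion, Set.mem_iUnion, mem_coe, exists_prop]
  refine ⟨hD.2 e, ?_⟩
  rintro ⟨p, hp, he⟩
  obtain ⟨v, hv, rfl⟩ := mem_image.mp he
  exact (hD.1.1 p hp).2 v hv

lemma IsStarDecompOn.ncard_edgeSet (hD : IsStarDecompOn G k D) :
    G.edgeSet.ncard = #D * k := by
  rw [hD.edgeSet_eq, Set.ncard_coe_finset, card_biUnion hD.1.2, sum_const_nat]
  intro p hp
  rw [card_starEdges, (hD.1.1 p hp).1]

lemma IsStarDecompOn.isVertexCover_centers (hD : IsStarDecompOn G k D) :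
    G.IsVertexCover ↑(D.image Prod.fst) := by
  intro u v hadj
  obtain ⟨p, hp, he⟩ := hD.2 s(u, v) hadj
  obtain ⟨w, -, hw⟩ := mem_image.mp he
  have hc : p.1 ∈ D.image Prod.fst := mem_image_of_mem _ hp
  rcases Sym2.eq_iff.mp hw with ⟨rfl, -⟩ | ⟨rfl, -⟩
  exacts [.inl hc, .inr hc]

lemma IsStarDecompOn.exists_isIndepSet_card_le [Fintype W] (hD : IsStarDecompOn G k D) :
    ∃ I : Finset W, G.IsIndepSet ↑I ∧ Fintype.card W ≤ #D + #I := by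
  refine ⟨(D.image Prod.fst)ᶜ, ?_, ?_⟩
  · rw [coe_compl, isIndepSet_compl_iff_isVertexCover]
    exact hD.isVertexCover_centers
  · rw [card_compl]
    have := card_le_univ (D.image Prod.fst)
    have := card_image_le (s := D) (f := Prod.fst)
    omega

end StarDecomposition

section Join

variable {V : Type*} {L : SimpleGraph V} {s : ℕ}

lemma SimpleGraph.IsIndepSet.card_le_indepNumber [Fintype V] {t : Finset V}
    (ht : L.IsIndepSet ↑t) : #t ≤ indepNumber L :=
  le_csSup ⟨Fintype.card V, by rintro m ⟨u, rfl, -⟩; exact card_le_univ u⟩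
    ⟨t, rfl, fun x hx y hy => ht hx hy⟩

lemma one_le_indepNumber [Fintype V] [Nonempty V] : 1 ≤ indepNumber L := by
  obtain ⟨a⟩ := ‹Nonempty V›
  have ha : L.IsIndepSet ↑({a} : Finset V) := by
    rw [coe_singleton]
    exact Set.pairwise_singleton a _
  simpa using ha.card_le_indepNumber

lemma joinK_adj_inl_inl {a b : V} : (joinK L s).Adj (.inl a) (.inl b) ↔ L.Adj a b :=
  ⟨fun h => h.2 a b rfl rfl, fun h => ⟨by simpa using h.ne, by rintro _ _ ⟨⟩ ⟨⟩; exact h⟩⟩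

lemma joinK_adj_inr {i : Fin s} {x : V ⊕ Fin s} : (joinK L s).Adj (.inr i) x ↔ .inr i ≠ x :=
  ⟨And.left, fun h => ⟨h, by rintro _ _ ⟨⟩⟩⟩

lemma SimpleGraph.IsIndepSet.toLeft_of_joinK {I : Finset (V ⊕ Fin s)}
    (hI : (joinK L s).IsIndepSet ↑I) : L.IsIndepSet ↑I.toLeft := fun a ha b hb hab hL =>
  hI (mem_toLeft.mp ha) (mem_toLeft.mp hb) (by simpa using hab) (joinK_adj_inl_inl.mpr hL)

lemma SimpleGraph.IsIndepSet.card_le_one_of_inr_mem_joinK {I : Finset (V ⊕ Fin s)}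
    (hI : (joinK L s).IsIndepSet ↑I) {i : Fin s} (hi : .inr i ∈ I) : #I ≤ 1 := by
  have hsub : I ⊆ {.inr i} := fun x hx => mem_singleton.mpr <| by
    by_contra hxi
    exact hI hi hx (Ne.symm hxi) (joinK_adj_inr.mpr (Ne.symm hxi))
  simpa using card_le_card hsub

lemma SimpleGraph.IsIndepSet.card_le_indepNumber_of_joinK [Fintype V] [Nonempty V]
    {I : Finset (V ⊕ Fin s)} (hI : (joinK L s).IsIndepSet ↑I) : #I ≤ indepNumber L := by
  rcases I.toRight.eq_empty_or_nonempty with hR | ⟨i, hi⟩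
  · rw [← card_toLeft_add_card_toRight, hR, card_empty, add_zero]
    exact hI.toLeft_of_joinK.card_le_indepNumber
  · exact (hI.card_le_one_of_inr_mem_joinK (mem_toRight.mp hi)).trans one_le_indepNumber

end Join

/-- if `L ∨ K_s` has a `k`-star decomposition then
`α(L) ≥ n + s - |E(L ∨ K_s)|/k`. -/
theorem stmt10 {V : Type*} [Fintype V] [DecidableEq V] (k n s : ℕ)
    (hk : 2 ≤ k) (hn : 1 ≤ n) (hV : Fintype.card V = n) (L : SimpleGraph V)
    (hdec : ∃ D, IsStarDecompOn (joinK L s) k D) :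
    (n : ℝ) + s - ((joinK L s).edgeSet.ncard : ℝ) / k ≤ indepNumber L := by
  obtain ⟨D, hD⟩ := hdec
  have : Nonempty V := Fintype.card_pos_iff.mp (by omega)
  obtain ⟨I, hI, hcard⟩ := hD.exists_isIndepSet_card_le
  rw [Fintype.card_sum, hV, Fintype.card_fin] at hcard
  have hcard' : (n : ℝ) + s ≤ #D + #I := by exact_mod_cast hcard
  have hα : (#I : ℝ) ≤ indepNumber L := by exact_mod_cast hI.card_le_indepNumber_of_joinK
  rw [hD.ncard_edgeSet, Nat.cast_mul, mul_div_cancel_right₀ _ (Nat.cast_ne_zero.mpr (by omega))]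
  linarith
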